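/- arXiv:math/0512316 — 9 statements merged into one kernel-verified Lean document; each statement's English description precedes it below -/
import Mathlib

section
/- Let (S,T) be a compact Hausdorff space equipped with a right quasigroup structure ∘ with identity e. Then there exist a Hausdorff topological group G, a closed subgroup H of G, and a topological embedding ι : (S,T) → G with ι(e) = 1 such that ι(S) is a right transversal of H in G and ι(x)·ι(y) ∈ H·ι(x ∘ y) for all x, y ∈ S, if and only if both maps ∘ : S × S → S and χ : S × S → S are continuous (S × S with the product topology). -/
/-!
The right translations `x ↦ x ∘ y` of `S` form a family of homeomorphisms depending continuously
on `y` exactly when `∘` and `χ` are continuous. In that case `y ↦ (x ↦ x ∘ y)⁻¹` embeds `S` into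
the homeomorphism group of `S` (a Hausdorff topological group for the Arens topology, as `S` is
compact Hausdorff) as a right transversal of the stabilizer of `e`. Conversely, in any such
embedding `x ∘ y` is the transversal representative of the coset `H ι(x) ι(y)`, and likewise
`χ(x, y)` that of `H ι(y) ι(x)⁻¹`; their graphs are therefore closed, and a map into a compact
space with closed graph is continuous.
-/

universe u

/-- `S` is a right transversal of the subgroup `H` in `G`: every element of `G`
can be written uniquely as `h * s` with `h ∈ H` and `s ∈ S`. -/
def IsRightTransversal {G : Type*} [Group G] (H : Subgroup G) (S : Set G) : Prop :=
  ∀ g : G, ∃! p : H × S, g = (p.1 : G) * (p.2 : G)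

open Function Set Topology

theorem continuous_of_isClosed_graph {X Y : Type*} [TopologicalSpace X] [TopologicalSpace Y]
    [CompactSpace Y] {f : X → Y} (hf : IsClosed (Function.graph f)) : Continuous f := by
  refine continuous_iff_isClosed.2 fun C hC => ?_
  have hpre : f ⁻¹' C = Prod.fst '' (Function.graph f ∩ Prod.snd ⁻¹' C) := by
    ext x
    constructor
    · exact fun hx => ⟨(x, f x), ⟨mem_graph.2 rfl, hx⟩, rfl⟩
    · rintro ⟨⟨a, b⟩, ⟨hab, hb⟩, rfl⟩
      exact (mem_graph.1 hab).symm ▸ hb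
  rw [hpre]
  exact isClosedMap_fst_of_compactSpace _ (hf.inter (hC.preimage continuous_snd))

theorem IsRightTransversal.eq_of_mul_inv_mem {G : Type*} [Group G] {H : Subgroup G} {T : Set G}
    (hT : IsRightTransversal H T) {s t : G} (hs : s ∈ T) (ht : t ∈ T) (hst : s * t⁻¹ ∈ H) :
    s = t := by
  obtain ⟨p, -, huniq⟩ := hT s
  have h₁ := huniq (⟨1, H.one_mem⟩, ⟨s, hs⟩) (one_mul s).symm
  have h₂ := huniq (⟨s * t⁻¹, hst⟩, ⟨t, ht⟩) (inv_mul_cancel_right s t).symm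
  exact congrArg (fun q : H × T => (q.2 : G)) (h₁.trans h₂.symm)

theorem continuous_of_isRightTransversal {X S G : Type*} [TopologicalSpace X] [TopologicalSpace S]
    [CompactSpace S] [Group G] [TopologicalSpace G] [IsTopologicalGroup G] {H : Subgroup G}
    (hH : IsClosed (H : Set G)) {ι : S → G} (hι : Continuous ι) (hinj : Injective ι)
    (hT : IsRightTransversal H (range ι)) {a : X → G} (ha : Continuous a) {f : X → S}
    (hf : ∀ x, ∃ h ∈ H, a x = h * ι (f x)) : Continuous f := by
  refine continuous_of_isClosed_graph ?_
  have hgraph : Function.graph f = {p : X × S | a p.1 * (ι p.2)⁻¹ ∈ H} := by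
    ext ⟨x, z⟩
    obtain ⟨h, hh, hx⟩ := hf x
    simp only [mem_graph, mem_ofPred_eq, hx]
    constructor
    · rintro rfl
      rwa [mul_inv_cancel_right]
    · intro hz
      refine hinj (hT.eq_of_mul_inv_mem (mem_range_self _) (mem_range_self _) ?_)
      simpa [mul_assoc] using H.mul_mem (H.inv_mem hh) hz
  rw [hgraph]
  exact hH.preimage (by fun_prop)

section Stabilizer

variable {G S : Type*} [Group G] [MulAction G S] {e : S} {ι : S → G}

theorem exists_mem_stabilizer_mul_eq (hι : ∀ s, (ι s)⁻¹ • e = s) (g : G) :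
    ∃ h ∈ MulAction.stabilizer G e, g = h * ι (g⁻¹ • e) :=
  ⟨g * (ι (g⁻¹ • e))⁻¹, by rw [MulAction.mem_stabilizer_iff, mul_smul, hι, smul_inv_smul],
    (inv_mul_cancel_right _ _).symm⟩

theorem isRightTransversal_stabilizer (hι : ∀ s, (ι s)⁻¹ • e = s) :
    IsRightTransversal (MulAction.stabilizer G e) (range ι) := by
  intro g
  obtain ⟨h, hh, hg⟩ := exists_mem_stabilizer_mul_eq hι g
  refine ⟨(⟨h, hh⟩, ⟨_, mem_range_self _⟩), hg, ?_⟩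
  rintro ⟨⟨h', hh'⟩, ⟨_, s, rfl⟩⟩ (hg' : g = h' * ι s)
  have hs : g⁻¹ • e = s := by
    rw [hg', mul_inv_rev, mul_smul, MulAction.mem_stabilizer_iff.1 (inv_mem hh'), hι]
  rw [hs] at hg
  exact Prod.ext (Subtype.ext (mul_right_cancel (hg'.symm.trans hg)))
    (Subtype.ext (congrArg ι hs.symm))

end Stabilizer

namespace Homeomorph

variable {X : Type*} [TopologicalSpace X]

/-- The Arens topology; recording `f⁻¹` as well is what makes inversion continuous. -/
instance arensTopology : TopologicalSpace (X ≃ₜ X) :=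
  .induced (fun f => ((f : C(X, X)), (f.symm : C(X, X)))) inferInstance

theorem isEmbedding_prodMk_symm :
    IsEmbedding fun f : X ≃ₜ X => ((f : C(X, X)), (f.symm : C(X, X))) :=
  ⟨⟨rfl⟩, fun _ _ h => Homeomorph.ext fun x => DFunLike.congr_fun (congrArg Prod.fst h) x⟩

theorem continuous_toContinuousMap : Continuous fun f : X ≃ₜ X => (f : C(X, X)) :=
  continuous_fst.comp isEmbedding_prodMk_symm.continuous

theorem continuous_symm_toContinuousMap : Continuous fun f : X ≃ₜ X => (f.symm : C(X, X)) :=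
  continuous_snd.comp isEmbedding_prodMk_symm.continuous

instance [T2Space X] : T2Space (X ≃ₜ X) :=
  isEmbedding_prodMk_symm.t2Space

instance [LocallyCompactSpace X] : IsTopologicalGroup (X ≃ₜ X) where
  continuous_mul := isEmbedding_prodMk_symm.isInducing.continuous_iff.2 <|
    ((continuous_toContinuousMap.comp continuous_fst).compCM
        (continuous_toContinuousMap.comp continuous_snd)).prodMk
      ((continuous_symm_toContinuousMap.comp continuous_snd).compCM
        (continuous_symm_toContinuousMap.comp continuous_fst))
  continuous_inv := isEmbedding_prodMk_symm.isInducing.continuous_iff.2 <|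
    continuous_symm_toContinuousMap.prodMk continuous_toContinuousMap

theorem continuous_of_continuous_uncurry {Y : Type*} [TopologicalSpace Y] {F : Y → X ≃ₜ X}
    (hF : Continuous fun p : Y × X => F p.1 p.2)
    (hF' : Continuous fun p : Y × X => (F p.1).symm p.2) : Continuous F :=
  isEmbedding_prodMk_symm.isInducing.continuous_iff.2 <|
    (ContinuousMap.curry ⟨_, hF⟩).continuous.prodMk (ContinuousMap.curry ⟨_, hF'⟩).continuous

instance : MulAction (X ≃ₜ X) X where
  smul f x := f x
  one_smul _ := rfl
  mul_smul _ _ _ := rfl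

theorem isClosed_stabilizer [T1Space X] (x : X) :
    IsClosed (MulAction.stabilizer (X ≃ₜ X) x : Set (X ≃ₜ X)) :=
  isClosed_singleton.preimage ((continuous_eval_const x).comp continuous_toContinuousMap)

end Homeomorph

section RightQuasigroup

variable {S : Type*} [TopologicalSpace S] {op chi : S → S → S}

def rightDivHomeomorph (hinj : ∀ y, Injective fun x => op x y) (hchi : ∀ x y, op (chi x y) x = y)
    (hop : Continuous fun p : S × S => op p.1 p.2) (hchi' : Continuous fun p : S × S => chi p.1 p.2)
    (y : S) : S ≃ₜ S where
  toFun := chi y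
  invFun x := op x y
  left_inv z := hchi y z
  right_inv x := hinj y (hchi y (op x y))
  continuous_toFun := hchi'.comp (continuous_const.prodMk continuous_id)
  continuous_invFun := hop.comp (continuous_id.prodMk continuous_const)

variable (hinj : ∀ y, Injective fun x => op x y) (hchi : ∀ x y, op (chi x y) x = y)
  (hop : Continuous fun p : S × S => op p.1 p.2) (hchi' : Continuous fun p : S × S => chi p.1 p.2)

theorem rightDivHomeomorph_inv_smul (y x : S) :
    (rightDivHomeomorph hinj hchi hop hchi' y)⁻¹ • x = op x y := rfl

theorem continuous_rightDivHomeomorph : Continuous (rightDivHomeomorph hinj hchi hop hchi') :=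
  Homeomorph.continuous_of_continuous_uncurry hchi' (hop.comp continuous_swap)

theorem rightDivHomeomorph_injective {e : S} (he : ∀ x, op e x = x) :
    Injective (rightDivHomeomorph hinj hchi hop hchi') := fun y y' h => by
  simpa only [rightDivHomeomorph_inv_smul, he] using
    congrArg (fun f : S ≃ₜ S => f⁻¹ • e) h

theorem rightDivHomeomorph_eq_one {e : S} (he : ∀ x, op x e = x) :
    rightDivHomeomorph hinj hchi hop hchi' e = 1 :=
  inv_eq_one.1 <| Homeomorph.ext fun x =>
    (rightDivHomeomorph_inv_smul hinj hchi hop hchi' e x).trans (he x)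

end RightQuasigroup

/-- A compact Hausdorff right quasigroup `(S, ∘)` with identity `e` embeds as a right
transversal of a closed subgroup of a Hausdorff topological group (inducing `∘`)
if and only if `∘` and `χ` are continuous. -/
theorem compact_embeds_iff_continuous {S : Type u} [TopologicalSpace S]
    [CompactSpace S] [T2Space S]
    (op : S → S → S) (e : S)
    (he₁ : ∀ x, op e x = x) (he₂ : ∀ x, op x e = x)
    (hbij : ∀ y, Function.Bijective fun x => op x y)
    (chi : S → S → S) (hchi : ∀ x y, op (chi x y) x = y) :
    (∃ (G : Type u) (_ : Group G) (_ : TopologicalSpace G) (_ : IsTopologicalGroup G)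
        (_ : T2Space G) (H : Subgroup G) (ι : S → G),
        IsClosed (H : Set G) ∧ Topology.IsEmbedding ι ∧ ι e = 1 ∧
        IsRightTransversal H (Set.range ι) ∧
        ∀ x y : S, ∃ h ∈ H, ι x * ι y = h * ι (op x y)) ↔
      (Continuous fun p : S × S => op p.1 p.2) ∧
        (Continuous fun p : S × S => chi p.1 p.2) := by
  constructor
  · rintro ⟨G, _, _, _, _, H, ι, hH, hι, -, hT, hmul⟩
    have hchi_coset (x y : S) : ∃ h ∈ H, ι y * (ι x)⁻¹ = h * ι (chi x y) := by
      obtain ⟨h, hh, hxy⟩ := hmul (chi x y) x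
      refine ⟨h⁻¹, H.inv_mem hh, ?_⟩
      rw [hchi] at hxy
      rw [mul_inv_eq_iff_eq_mul, mul_assoc, hxy, inv_mul_cancel_left]
    exact ⟨continuous_of_isRightTransversal hH hι.continuous hι.injective hT (by fun_prop)
        fun p => hmul p.1 p.2,
      continuous_of_isRightTransversal hH hι.continuous hι.injective hT (by fun_prop)
        fun p => hchi_coset p.1 p.2⟩
  · rintro ⟨hop, hchi'⟩
    have hinj y := (hbij y).injective
    set ι := rightDivHomeomorph hinj hchi hop hchi'
    refine ⟨S ≃ₜ S, inferInstance, inferInstance, inferInstance, inferInstance,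
      MulAction.stabilizer _ e, ι, Homeomorph.isClosed_stabilizer e,
      ((continuous_rightDivHomeomorph ..).isClosedEmbedding
        (rightDivHomeomorph_injective hinj hchi hop hchi' he₁)).isEmbedding,
      rightDivHomeomorph_eq_one hinj hchi hop hchi' he₂,
      isRightTransversal_stabilizer (ι := ι) he₁, fun x y => ?_⟩
    obtain ⟨h, hh, hxy⟩ := exists_mem_stabilizer_mul_eq (ι := ι) he₁ (ι x * ι y)
    rw [mul_inv_rev, mul_smul, rightDivHomeomorph_inv_smul, rightDivHomeomorph_inv_smul,
      he₁] at hxy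
    exact ⟨h, hh, hxy⟩
end

section
/- Let G be a group, H a subgroup of G, and S a right transversal of H in G with 1 ∈ S. Define the induced operation ∘ on S by letting x ∘ y be the unique element of S lying in the coset H·x·y. Then (S, ∘) is a right quasigroup with identity 1: 1 ∘ x = x ∘ 1 = x for all x ∈ S, and for every y ∈ S the map x ↦ x ∘ y is a bijection of S onto itself. -/
/-- If `S` is a right transversal of `H` in `G` with `1 ∈ S`, and `∘` is the induced
operation (`x ∘ y` is the unique element of `S` in the coset `H·x·y`), then `(S, ∘)`
is a right quasigroup with identity `1`. -/
theorem transversal_is_right_quasigroup {G : Type*} [Group G] (H : Subgroup G) (S : Set G)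
    (hT : IsRightTransversal H S) (h1 : (1 : G) ∈ S)
    (op : S → S → S)
    (hop : ∀ x y : S, ∃ h ∈ H, (x : G) * (y : G) = h * (op x y : G)) :
    (∀ x : S, op ⟨1, h1⟩ x = x) ∧ (∀ x : S, op x ⟨1, h1⟩ = x) ∧
      ∀ y : S, Function.Bijective (fun x : S => op x y) := by
  -- uniqueness of the S-component
  have uniq : ∀ (h h' : G), h ∈ H → h' ∈ H → ∀ s s' : S,
      h * (s : G) = h' * (s' : G) → s = s' := by
    intro h h' hh hh' s s' heq
    have := hT (h * (s : G))
    obtain ⟨p, -, hu⟩ := this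
    have e1 : (⟨⟨h, hh⟩, s⟩ : H × S) = p := hu _ rfl
    have e2 : (⟨⟨h', hh'⟩, s'⟩ : H × S) = p := hu _ heq
    have := e1.trans e2.symm
    exact (congrArg Prod.snd this)
  have left : ∀ x : S, op ⟨1, h1⟩ x = x := by
    intro x
    obtain ⟨h, hh, he⟩ := hop ⟨1, h1⟩ x
    refine uniq h 1 hh H.one_mem _ _ ?_
    simpa using he.symm
  have right : ∀ x : S, op x ⟨1, h1⟩ = x := by
    intro x
    obtain ⟨h, hh, he⟩ := hop x ⟨1, h1⟩
    refine uniq h 1 hh H.one_mem _ _ ?_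
    simpa using he.symm
  refine ⟨left, right, fun y => ⟨?_, ?_⟩⟩
  · intro x x' hxx
    obtain ⟨h, hh, he⟩ := hop x y
    obtain ⟨h', hh', he'⟩ := hop x' y
    simp only at hxx
    rw [hxx] at he
    -- x = h * (op x' y) * (y : G)⁻¹ ; x' = h' * (op x' y) * (y : G)⁻¹
    refine uniq 1 (h * h'⁻¹) H.one_mem (H.mul_mem hh (H.inv_mem hh')) x x' ?_
    have : (x : G) * y = h * h'⁻¹ * ((x' : G) * y) := by
      rw [he', he]; group
    calc 1 * (x : G) = ((x : G) * y) * (y : G)⁻¹ := by group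
      _ = (h * h'⁻¹ * ((x' : G) * y)) * (y : G)⁻¹ := by rw [this]
      _ = h * h'⁻¹ * (x' : G) := by group
  · intro z
    obtain ⟨p, hp, -⟩ := hT ((z : G) * (y : G)⁻¹)
    refine ⟨p.2, ?_⟩
    obtain ⟨h, hh, he⟩ := hop p.2 y
    refine uniq h ((p.1 : G)⁻¹) hh (H.inv_mem p.1.2) _ _ ?_
    rw [← he]
    have : (p.2 : G) = (p.1 : G)⁻¹ * ((z : G) * (y : G)⁻¹) := by
      rw [hp]; group
    rw [this]; group
end

section
/- Let G be a group, H a subgroup of G, S a right transversal of H in G, ⟨S⟩ the subgroup of G generated by S, and H_S = ⟨S⟩ ∩ H. Then ⟨S⟩ = H_S·S; more precisely, S is a right transversal of H_S in ⟨S⟩: every element of ⟨S⟩ can be written uniquely as h·s with h ∈ H_S and s ∈ S. -/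
open scoped Pointwise

/-- If `S` is a right transversal of `H` in `G`, then `⟨S⟩ = H_S·S` where
`H_S = ⟨S⟩ ∩ H`; more precisely, `S` is a right transversal of `H_S` in `⟨S⟩`. -/
theorem transversal_of_generated_subgroup {G : Type*} [Group G] (H : Subgroup G) (S : Set G)
    (hT : IsRightTransversal H S) :
    ((Subgroup.closure S : Set G) = ((Subgroup.closure S ⊓ H : Subgroup G) : Set G) * S) ∧
      ∀ g ∈ Subgroup.closure S,
        ∃! p : (Subgroup.closure S ⊓ H : Subgroup G) × S, g = (p.1 : G) * (p.2 : G) := by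
  have key : ∀ g ∈ Subgroup.closure S,
      ∃! p : (Subgroup.closure S ⊓ H : Subgroup G) × S, g = (p.1 : G) * (p.2 : G) := by
    intro g hg
    obtain ⟨⟨h, s⟩, hp, hu⟩ := hT g
    have hs : (s : G) ∈ Subgroup.closure S := Subgroup.subset_closure s.2
    have hh : (h : G) ∈ Subgroup.closure S ⊓ H := by
      refine Subgroup.mem_inf.mpr ⟨?_, h.2⟩
      have : (h : G) = g * (s : G)⁻¹ := by rw [hp]; group
      rw [this]; exact mul_mem hg (inv_mem hs)
    refine ⟨⟨⟨(h : G), hh⟩, s⟩, hp, ?_⟩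
    rintro ⟨h', s'⟩ he
    have h2 := hu ⟨⟨(h' : G), h'.2.2⟩, s'⟩ he
    rw [Prod.mk.injEq] at h2 ⊢
    have hv : (h' : G) = (h : G) := congrArg Subtype.val h2.1
    exact ⟨Subtype.ext hv, h2.2⟩
  refine ⟨?_, key⟩
  ext g
  constructor
  · intro hg
    obtain ⟨⟨h, s⟩, hp, -⟩ := key g hg
    exact ⟨h, h.2, s, s.2, hp.symm⟩
  · rintro ⟨h, hh, s, hs, rfl⟩
    exact mul_mem hh.1 (Subgroup.subset_closure hs)
end

section
/- Let G be a group, H a subgroup of G, and S a right transversal of H in G with 1 ∈ S, and let ∘ denote the induced operation on S (x ∘ y is the unique element of S lying in the coset H·x·y). Then the subgroup ⟨S⟩ ∩ H of G, where ⟨S⟩ is the subgroup generated by S, is generated by the set {x·y·(x ∘ y)⁻¹ : x, y ∈ S}. -/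
/-- If `S` is a right transversal of `H` in `G` with `1 ∈ S` and `∘` the induced
operation, then `⟨S⟩ ∩ H` is generated by `{x·y·(x ∘ y)⁻¹ : x, y ∈ S}`. -/
theorem generated_intersection_eq {G : Type*} [Group G] (H : Subgroup G) (S : Set G)
    (hT : IsRightTransversal H S) (h1 : (1 : G) ∈ S)
    (op : S → S → S)
    (hop : ∀ x y : S, ∃ h ∈ H, (x : G) * (y : G) = h * (op x y : G)) :
    Subgroup.closure S ⊓ H =
      Subgroup.closure {g : G | ∃ x y : S, g = (x : G) * (y : G) * (op x y : G)⁻¹} := by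
  set D : Set G := {g : G | ∃ x y : S, g = (x : G) * (y : G) * (op x y : G)⁻¹} with hD
  set T : Subgroup G := Subgroup.closure D with hTdef
  -- D ⊆ H
  have hDH : D ⊆ (H : Set G) := by
    rintro g ⟨x, y, rfl⟩
    obtain ⟨h, hh, he⟩ := hop x y
    have : (x : G) * (y : G) * (op x y : G)⁻¹ = h := by
      rw [he]; group
    rw [this]; exact hh
  have hTH : T ≤ H := (Subgroup.closure_le H).2 hDH
  -- D ⊆ closure S
  have hDS : T ≤ Subgroup.closure S := by
    apply (Subgroup.closure_le _).2
    rintro g ⟨x, y, rfl⟩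
    exact mul_mem (mul_mem (Subgroup.subset_closure x.2) (Subgroup.subset_closure y.2))
      (inv_mem (Subgroup.subset_closure (op x y).2))
  -- generator step
  have key : ∀ t ∈ T, ∀ s x : S, ∃ t' ∈ T, ∃ s' : S, t * (s : G) * (x : G) = t' * (s' : G) := by
    intro t ht s x
    refine ⟨t * ((s : G) * x * (op s x : G)⁻¹), mul_mem ht (Subgroup.subset_closure ⟨s, x, rfl⟩),
      op s x, ?_⟩
    group
  -- inverse generator step
  have keyinv : ∀ t ∈ T, ∀ s x : S, ∃ t' ∈ T, ∃ s' : S, t * (s : G) * (x : G)⁻¹ = t' * (s' : G) := by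
    intro t ht s x
    obtain ⟨⟨h, u⟩, he, _⟩ := hT ((s : G) * (x : G)⁻¹)
    simp only at he
    have hux : (u : G) * x = (h : G)⁻¹ * s := by
      rw [eq_inv_mul_iff_mul_eq, ← mul_assoc, ← he]; group
    obtain ⟨h', hh', he'⟩ := hop u x
    have hs : (s : G) = ((h * ⟨h', hh'⟩ : H) : G) * ((op u x : S) : G) := by
      have : (h : G)⁻¹ * s = h' * (op u x : G) := by rw [← hux, he']
      push_cast
      rw [mul_assoc, ← this]; group
    have hs1 : (s : G) = ((⟨1, one_mem H⟩ : H) : G) * ((s : S) : G) := by simp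
    obtain ⟨_, hu1, hu2⟩ := hT (s : G)
    have heq := (hu2 (⟨h * ⟨h', hh'⟩, op u x⟩) hs).trans (hu2 (⟨⟨1, one_mem H⟩, s⟩) hs1).symm
    have h1' : (h : G) * h' = 1 := congrArg (fun p => ((p.1 : H) : G)) heq
    have h2' : ((op u x : S) : G) = s := congrArg (fun p => ((p.2 : S) : G)) heq
    have hinvD : (h : G)⁻¹ ∈ D := by
      refine ⟨u, x, ?_⟩
      have : h' = (h : G)⁻¹ := eq_inv_of_mul_eq_one_right h1'
      rw [he', this]; group
    have hhT : (h : G) ∈ T := by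
      have := Subgroup.subset_closure hinvD
      simpa using inv_mem this
    exact ⟨t * h, mul_mem ht hhT, u, by rw [mul_assoc, he]; group⟩
  -- main induction
  have main : ∀ g ∈ Subgroup.closure S,
      (∀ t ∈ T, ∀ s : S, ∃ t' ∈ T, ∃ s' : S, t * (s : G) * g = t' * (s' : G)) ∧
      (∀ t ∈ T, ∀ s : S, ∃ t' ∈ T, ∃ s' : S, t * (s : G) * g⁻¹ = t' * (s' : G)) := by
    intro g hg
    induction hg using Subgroup.closure_induction with
    | mem x hx => exact ⟨fun t ht s => key t ht s ⟨x, hx⟩, fun t ht s => keyinv t ht s ⟨x, hx⟩⟩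
    | one =>
      constructor <;> (intro t ht s; exact ⟨t, ht, s, by group⟩)
    | mul a b _ _ iha ihb =>
      constructor
      · intro t ht s
        obtain ⟨t1, ht1, s1, h1e⟩ := iha.1 t ht s
        obtain ⟨t2, ht2, s2, h2e⟩ := ihb.1 t1 ht1 s1
        exact ⟨t2, ht2, s2, by rw [← h2e, ← h1e]; group⟩
      · intro t ht s
        obtain ⟨t1, ht1, s1, h1e⟩ := ihb.2 t ht s
        obtain ⟨t2, ht2, s2, h2e⟩ := iha.2 t1 ht1 s1
        exact ⟨t2, ht2, s2, by rw [← h2e, ← h1e]; group⟩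
    | inv a _ ih =>
      exact ⟨fun t ht s => by simpa using ih.2 t ht s,
             fun t ht s => by simpa using ih.1 t ht s⟩
  apply le_antisymm
  · rintro g ⟨hgS, hgH⟩
    obtain ⟨t', ht', s', he⟩ := (main g hgS).1 1 (one_mem T) ⟨1, h1⟩
    simp only [Subtype.coe_mk, mul_one, one_mul] at he
    -- g = t' * s', g ∈ H, t' ∈ H
    have hgdec : g = ((⟨t', hTH ht'⟩ : H) : G) * ((s' : S) : G) := he
    have hgdec1 : g = ((⟨g, hgH⟩ : H) : G) * ((⟨1, h1⟩ : S) : G) := by simp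
    obtain ⟨_, _, hu2⟩ := hT g
    have heq := (hu2 (⟨⟨t', hTH ht'⟩, s'⟩) hgdec).trans (hu2 (⟨⟨g, hgH⟩, ⟨1, h1⟩⟩) hgdec1).symm
    have : t' = g := congrArg (fun p => ((p.1 : H) : G)) heq
    rw [← this]; exact ht'
  · exact le_inf hDS hTH
end

section
/- Let η : G → G' be a surjective group homomorphism, S a subset of G on which η is injective, and H' a subgroup of G' such that η(S) is a right transversal of H' in G'. Then S is a right transversal of the subgroup η⁻¹(H') in G, and the induced operations correspond under η: for all x, y ∈ S, η(x ∘_S y) = η(x) ∘' η(y), where ∘_S is the operation induced on S as a transversal of η⁻¹(H') and ∘' is the operation induced on η(S) as a transversal of H'. -/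
/-!
`S` is a right transversal of `H` exactly when every `g` has a unique `s ∈ S` with
`g * s⁻¹ ∈ H`. Since `η (g * s⁻¹) = η g * (η s)⁻¹`, this condition for `η⁻¹(H')` and `S` is
the condition for `H'` and `η(S)`, with uniqueness carried back by injectivity of `η` on `S`.
For the induced operations, `η` sends a decomposition `x * y = h * z` to a decomposition of
`η x * η y` along `H'` and `η(S)`, so `η z` is the representative of `η x * η y`.
-/

open Subgroup Set

namespace IsRightTransversal

variable {G G' : Type*} [Group G] [Group G'] {H : Subgroup G} {S : Set G}

theorem iff_isComplement : IsRightTransversal H S ↔ IsComplement (H : Set G) S := by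
  simp only [IsRightTransversal, isComplement_iff_existsUnique, eq_comm]
  rfl

theorem iff_existsUnique_mul_inv_mem :
    IsRightTransversal H S ↔ ∀ g : G, ∃! s : S, g * (s : G)⁻¹ ∈ H :=
  iff_isComplement.trans isComplement_iff_existsUnique_mul_inv_mem

theorem eq_of_mul_eq_mul (hT : IsRightTransversal H S) {h₁ h₂ s₁ s₂ : G} (hh₁ : h₁ ∈ H)
    (hh₂ : h₂ ∈ H) (hs₁ : s₁ ∈ S) (hs₂ : s₂ ∈ S) (heq : h₁ * s₁ = h₂ * s₂) : s₁ = s₂ :=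
  congrArg (fun p : H × S => (p.2 : G))
    ((iff_isComplement.1 hT).1 (a₁ := (⟨h₁, hh₁⟩, ⟨s₁, hs₁⟩)) (a₂ := (⟨h₂, hh₂⟩, ⟨s₂, hs₂⟩)) heq)

theorem comap {f : G →* G'} {H' : Subgroup G'} (hT : IsRightTransversal H' (f '' S))
    (hf : InjOn f S) : IsRightTransversal (H'.comap f) S := by
  rw [iff_existsUnique_mul_inv_mem] at hT ⊢
  intro g
  obtain ⟨⟨_, s, hs, rfl⟩, hmem, huniq⟩ := hT (f g)
  refine ⟨⟨s, hs⟩, by simpa using hmem, fun ⟨s', hs'⟩ hmem' => ?_⟩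
  have hfs : f s' = f s :=
    congrArg Subtype.val (huniq ⟨f s', mem_image_of_mem f hs'⟩ (by simpa using hmem'))
  exact Subtype.ext (hf hs' hs hfs)

end IsRightTransversal

theorem transversal_pullback_general {G G' : Type*} [Group G] [Group G'] (η : G →* G')
    (S : Set G) (hinj : Set.InjOn η S)
    (H' : Subgroup G') (hT : IsRightTransversal H' (η '' S)) :
    IsRightTransversal (H'.comap η) S ∧
      ∀ x ∈ S, ∀ y ∈ S, ∀ z ∈ S, ∀ z' ∈ η '' S,
        (∃ h ∈ H'.comap η, x * y = h * z) → (∃ h' ∈ H', η x * η y = h' * z') →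
          η z = z' := by
  refine ⟨hT.comap hinj, ?_⟩
  rintro x - y - z hz z' hz' ⟨h, hh, hxy⟩ ⟨h', hh', hxy'⟩
  refine hT.eq_of_mul_eq_mul hh hh' (mem_image_of_mem η hz) hz' ?_
  rw [← map_mul, ← hxy, map_mul, hxy']

/-- If `η : G → G'` is a surjective homomorphism injective on `S ⊆ G`, and `η(S)` is a
right transversal of `H'` in `G'`, then `S` is a right transversal of `η⁻¹(H')` in `G`,
and the induced operations correspond under `η`. -/
theorem transversal_pullback {G G' : Type*} [Group G] [Group G'] (η : G →* G')
    (hsurj : Function.Surjective η) (S : Set G) (hinj : Set.InjOn η S)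
    (H' : Subgroup G') (hT : IsRightTransversal H' (η '' S)) :
    IsRightTransversal (H'.comap η) S ∧
      ∀ x ∈ S, ∀ y ∈ S, ∀ z ∈ S, ∀ z' ∈ η '' S,
        (∃ h ∈ H'.comap η, x * y = h * z) → (∃ h' ∈ H', η x * η y = h' * z') →
          η z = z' :=
  transversal_pullback_general η S hinj H' hT
end

section
/- Let K be a group such that every topology on K making it a T1 topological group is the discrete topology, and let D be a finite group. Then every topology on the direct product K × D making it a T1 topological group is the discrete topology. -/
/-!
The subgroup `K × {1} ≅ K` carries the subspace topology, a `T1` group topology, so it is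
discrete. A discrete subgroup of a `T1` (hence Hausdorff) group is closed, and a closed
subgroup of finite index is open; an open discrete subgroup makes the whole group discrete.
-/

def OnlyDiscreteGroupTopologies (K : Type*) [Group K] : Prop :=
  ∀ t : TopologicalSpace K, @IsTopologicalGroup K t _ → @T1Space K t → t = ⊥

namespace OnlyDiscreteGroupTopologies

variable {K H : Type*} [Group K] [Group H]

theorem discreteTopology (hK : OnlyDiscreteGroupTopologies K) [TopologicalSpace K]
    [IsTopologicalGroup K] [T1Space K] : DiscreteTopology K :=
  ⟨hK _ ‹_› ‹_›⟩

theorem of_mulEquiv (hK : OnlyDiscreteGroupTopologies K) (e : K ≃* H) :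
    OnlyDiscreteGroupTopologies H := by
  intro t _ _
  let tK : TopologicalSpace K := t.induced e
  have : @IsTopologicalGroup K tK _ := topologicalGroup_induced e.toMonoidHom
  have : @T1Space K tK := (Topology.IsEmbedding.induced e.injective).t1Space
  have : @DiscreteTopology K tK := hK.discreteTopology
  have he : Topology.IsEmbedding e.symm := by
    refine ⟨⟨?_⟩, e.symm.injective⟩
    have : e ∘ e.symm = id := funext e.apply_symm_apply
    rw [induced_compose, this, induced_id]
  exact he.discreteTopology.eq_bot

end OnlyDiscreteGroupTopologies

theorem MonoidHom.range_inl_eq_ker_snd (K D : Type*) [Group K] [Group D] :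
    (MonoidHom.inl K D).range = (MonoidHom.snd K D).ker := by
  ext ⟨k, d⟩
  simp [MonoidHom.mem_range, -MonoidHom.ker_snd, eq_comm]

/-- If every `T1` topological group topology on `K` is discrete and `D` is a finite group,
then every `T1` topological group topology on `K × D` is discrete. -/
theorem prod_with_finite_admits_only_discrete {K D : Type*} [Group K] [Group D] [Finite D]
    (hK : ∀ t : TopologicalSpace K, @IsTopologicalGroup K t _ → @T1Space K t → t = ⊥) :
    ∀ t : TopologicalSpace (K × D), @IsTopologicalGroup (K × D) t _ → @T1Space (K × D) t →
      t = ⊥ := by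
  intro t _ _
  have : (MonoidHom.inl K D).range.FiniteIndex := by
    rw [MonoidHom.range_inl_eq_ker_snd]
    infer_instance
  have : DiscreteTopology (MonoidHom.inl K D).range :=
    (OnlyDiscreteGroupTopologies.of_mulEquiv hK
      (MonoidHom.ofInjective fun _ _ h ↦ congrArg Prod.fst h)).discreteTopology
  exact (Subgroup.discreteTopology_iff_of_finiteIndex.mp this).eq_bot
end

section
/- Let E be a real Hilbert space and e₀ ∈ E a unit vector. Define a binary operation ∘ on the unit sphere S = {v ∈ E : ‖v‖ = 1} by x ∘ y = 2⟨J(x), a⟩a − J(x) for y ≠ −e₀, where a = (e₀ + y)/‖e₀ + y‖ and J(v) = 2⟨v, e₀⟩e₀ − v, and x ∘ (−e₀) = −x. Then e₀ is a two-sided identity for ∘: e₀ ∘ y = y and x ∘ e₀ = x for all unit vectors x, y ∈ S. -/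
/-!
Write `R_a v = 2⟨v, a⟩a - v` for the reflection in the line `ℝ a` (`a` a unit vector); then
`J = R_{e₀}` and `x ∘ y = R_a (J x)`. Since `J e₀ = e₀` and the reflection in the bisector of
`e₀` and `y` swaps them, `e₀ ∘ y = y`; since `a = e₀` when `y = e₀`, `x ∘ e₀ = J (J x) = x`.
-/

open RealInnerProductSpace

section LineReflection

variable {E : Type*} [NormedAddCommGroup E] [InnerProductSpace ℝ E]

def lineReflection (a v : E) : E := (2 * ⟪v, a⟫) • a - v

lemma lineReflection_self {a : E} (ha : ‖a‖ = 1) : lineReflection a a = a := by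
  rw [lineReflection, real_inner_self_eq_norm_sq, ha]
  module

lemma lineReflection_lineReflection {a : E} (ha : ‖a‖ = 1) (v : E) :
    lineReflection a (lineReflection a v) = v := by
  have haa : ⟪a, a⟫ = 1 := by rw [real_inner_self_eq_norm_sq, ha, one_pow]
  simp only [lineReflection, inner_sub_left, real_inner_smul_left, haa]
  module

lemma lineReflection_normalize_add {u w : E} (h : ‖u‖ = ‖w‖) (hne : u + w ≠ 0) :
    lineReflection (‖u + w‖⁻¹ • (u + w)) u = w := by
  have hn : ‖u + w‖ ≠ 0 := norm_ne_zero_iff.mpr hne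
  have hsq : ‖u + w‖ ^ 2 = 2 * ⟪u, u + w⟫ := by
    rw [norm_add_sq_real, inner_add_right, real_inner_self_eq_norm_sq, h]
    ring
  have hcoeff : 2 * ⟪u, ‖u + w‖⁻¹ • (u + w)⟫ * ‖u + w‖⁻¹ = 1 := by
    rw [real_inner_smul_right]
    field_simp
    linarith
  rw [lineReflection, smul_smul, hcoeff, one_smul]
  abel

lemma inv_norm_smul_add_self {e : E} (he : ‖e‖ = 1) : ‖e + e‖⁻¹ • (e + e) = e := by
  rw [← two_smul ℝ e, norm_smul, he, smul_smul]
  norm_num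

end LineReflection

theorem sphere_op_identity_general {E : Type*} [NormedAddCommGroup E]
    [InnerProductSpace ℝ E]
    (e₀ : E) (he₀ : ‖e₀‖ = 1) (op : E → E → E)
    (hop : ∀ x y : E, ‖x‖ = 1 → ‖y‖ = 1 → y ≠ -e₀ →
      op x y = (2 * (inner ℝ ((2 * (inner ℝ x e₀ : ℝ)) • e₀ - x)
          (‖e₀ + y‖⁻¹ • (e₀ + y)) : ℝ)) • (‖e₀ + y‖⁻¹ • (e₀ + y)) -
        ((2 * (inner ℝ x e₀ : ℝ)) • e₀ - x))
    (hop' : ∀ x : E, ‖x‖ = 1 → op x (-e₀) = -x) :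
    (∀ y : E, ‖y‖ = 1 → op e₀ y = y) ∧ (∀ x : E, ‖x‖ = 1 → op x e₀ = x) := by
  have hop_eq : ∀ x y : E, ‖x‖ = 1 → ‖y‖ = 1 → y ≠ -e₀ →
      op x y = lineReflection (‖e₀ + y‖⁻¹ • (e₀ + y)) (lineReflection e₀ x) := hop
  constructor
  · intro y hy
    rcases eq_or_ne y (-e₀) with rfl | hy'
    · exact hop' e₀ he₀
    · rw [hop_eq e₀ y he₀ hy hy', lineReflection_self he₀]
      exact lineReflection_normalize_add (he₀.trans hy.symm)
        fun h ↦ hy' (eq_neg_of_add_eq_zero_right h)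
  · intro x hx
    have he₀_ne : e₀ ≠ -e₀ := fun h ↦ by
      rw [eq_neg_iff_add_eq_zero, ← norm_eq_zero, ← two_smul ℝ, norm_smul, he₀] at h
      norm_num at h
    rw [hop_eq x e₀ hx he₀ he₀_ne, inv_norm_smul_add_self he₀,
      lineReflection_lineReflection he₀]

/-- For the binary operation on the unit sphere of a real Hilbert space given by
`x ∘ y = 2⟨J(x), a⟩a − J(x)` (with `a = (e₀ + y)/‖e₀ + y‖`, `J(v) = 2⟨v, e₀⟩e₀ − v`)
for `y ≠ -e₀`, and `x ∘ (-e₀) = -x`, the point `e₀` is a two-sided identity. -/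
theorem sphere_op_identity {E : Type*} [NormedAddCommGroup E]
    [InnerProductSpace ℝ E] [CompleteSpace E]
    (e₀ : E) (he₀ : ‖e₀‖ = 1) (op : E → E → E)
    (hop : ∀ x y : E, ‖x‖ = 1 → ‖y‖ = 1 → y ≠ -e₀ →
      op x y = (2 * (inner ℝ ((2 * (inner ℝ x e₀ : ℝ)) • e₀ - x)
          (‖e₀ + y‖⁻¹ • (e₀ + y)) : ℝ)) • (‖e₀ + y‖⁻¹ • (e₀ + y)) -
        ((2 * (inner ℝ x e₀ : ℝ)) • e₀ - x))
    (hop' : ∀ x : E, ‖x‖ = 1 → op x (-e₀) = -x) :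
    (∀ y : E, ‖y‖ = 1 → op e₀ y = y) ∧ (∀ x : E, ‖x‖ = 1 → op x e₀ = x) :=
  sphere_op_identity_general e₀ he₀ op hop hop'
end

section
/- Let E be a real Hilbert space and e₀ ∈ E a unit vector. Define a binary operation ∘ on the unit sphere S = {v ∈ E : ‖v‖ = 1} by x ∘ y = 2⟨J(x), a⟩a − J(x) for y ≠ −e₀, where a = (e₀ + y)/‖e₀ + y‖ and J(v) = 2⟨v, e₀⟩e₀ − v, and x ∘ (−e₀) = −x. Then for every unit vector y ∈ S, the map x ↦ x ∘ y is a bijection of S onto itself; consequently (S, ∘) is a right quasigroup with identity e₀. -/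
/-!
For `y ≠ -e₀`, `x ↦ x ∘ y` is the composite of the reflections in the lines `ℝ e₀` and
`ℝ (e₀ + y)`, and for `y = -e₀` it is `-id`; either way it is a linear isometry, hence a bijection
of the sphere. The reflection in the line through `e₀ + y` swaps the unit vectors `e₀` and `y`,
which gives `e₀ ∘ y = y`, and for `y = e₀` the two reflections coincide and cancel.
-/

open RealInnerProductSpace Submodule

theorem LinearIsometryEquiv.bijOn_setOf_norm_eq {𝕜 E F : Type*} [Semiring 𝕜]
    [SeminormedAddCommGroup E] [SeminormedAddCommGroup F] [Module 𝕜 E] [Module 𝕜 F]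
    (f : E ≃ₗᵢ[𝕜] F) (r : ℝ) : Set.BijOn f {v | ‖v‖ = r} {v | ‖v‖ = r} :=
  f.toEquiv.bijOn fun v => by simp

section Reflection

variable {E : Type*} [NormedAddCommGroup E] [InnerProductSpace ℝ E]

theorem Submodule.reflection_unit_singleton_apply {a : E} (ha : ‖a‖ = 1) (v : E) :
    reflection (ℝ ∙ a) v = (2 * ⟪v, a⟫) • a - v := by
  rw [reflection_apply, starProjection_unit_singleton ℝ ha, real_inner_comm, mul_smul, two_smul,
    two_smul]

theorem Submodule.reflection_span_singleton_smul (c : ℝ) {u : E} (hc : c ≠ 0) (v : E) :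
    reflection (ℝ ∙ c • u) v = reflection (ℝ ∙ u) v := by
  simp_rw [span_singleton_smul_eq (Ne.isUnit hc)]

theorem Submodule.reflection_span_add_apply {u w : E} (h : ‖u‖ = ‖w‖) :
    reflection (ℝ ∙ (u + w)) u = w := by
  have := reflection_sub (w := -w) (h.trans (norm_neg w).symm)
  rwa [sub_neg_eq_add, reflection_orthogonal_apply, neg_inj] at this

end Reflection

theorem sphere_op_right_quasigroup_general {E : Type*} [NormedAddCommGroup E]
    [InnerProductSpace ℝ E]
    (e₀ : E) (he₀ : ‖e₀‖ = 1) (op : E → E → E)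
    (hop : ∀ x y : E, ‖x‖ = 1 → ‖y‖ = 1 → y ≠ -e₀ →
      op x y = (2 * (inner ℝ ((2 * (inner ℝ x e₀ : ℝ)) • e₀ - x)
          (‖e₀ + y‖⁻¹ • (e₀ + y)) : ℝ)) • (‖e₀ + y‖⁻¹ • (e₀ + y)) -
        ((2 * (inner ℝ x e₀ : ℝ)) • e₀ - x))
    (hop' : ∀ x : E, ‖x‖ = 1 → op x (-e₀) = -x) :
    (∀ y : E, ‖y‖ = 1 →
      Set.BijOn (fun x => op x y) {v : E | ‖v‖ = 1} {v : E | ‖v‖ = 1}) ∧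
    (∀ y : E, ‖y‖ = 1 → op e₀ y = y) ∧ (∀ x : E, ‖x‖ = 1 → op x e₀ = x) := by
  have hop_refl : ∀ x y : E, ‖x‖ = 1 → ‖y‖ = 1 → y ≠ -e₀ →
      op x y = reflection (ℝ ∙ (e₀ + y)) (reflection (ℝ ∙ e₀) x) := by
    intro x y hx hy hy₀
    have hsum : ‖e₀ + y‖ ≠ 0 := norm_ne_zero_iff.2 fun h => hy₀ (add_eq_zero_iff_eq_neg'.1 h)
    have hunit : ‖‖e₀ + y‖⁻¹ • (e₀ + y)‖ = 1 := by
      rw [norm_smul, norm_inv, norm_norm, inv_mul_cancel₀ hsum]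
    rw [hop x y hx hy hy₀, ← reflection_span_singleton_smul _ (inv_ne_zero hsum),
      reflection_unit_singleton_apply hunit, reflection_unit_singleton_apply he₀]
  have he₀_ne_neg : e₀ ≠ -e₀ := fun h => by
    have h₁ := congrArg (⟪e₀, ·⟫) h
    norm_num [real_inner_self_eq_norm_sq, he₀] at h₁
  refine ⟨fun y hy => ?_, fun y hy => ?_, fun x hx => ?_⟩
  · by_cases hy₀ : y = -e₀
    · subst hy₀
      exact ((LinearIsometryEquiv.neg ℝ).bijOn_setOf_norm_eq 1).congr fun x hx => (hop' x hx).symm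
    · exact (((reflection (ℝ ∙ e₀)).trans (reflection (ℝ ∙ (e₀ + y)))).bijOn_setOf_norm_eq
        1).congr fun x hx => (hop_refl x y hx hy hy₀).symm
  · by_cases hy₀ : y = -e₀
    · rw [hy₀, hop' e₀ he₀]
    · rw [hop_refl e₀ y he₀ hy hy₀, reflection_mem_subspace_eq_self (mem_span_singleton_self e₀),
        reflection_span_add_apply (he₀.trans hy.symm)]
  · rw [hop_refl x e₀ hx he₀ he₀_ne_neg, ← two_smul ℝ e₀,
      reflection_span_singleton_smul _ two_ne_zero, reflection_reflection]

/-- For the binary operation on the unit sphere of a real Hilbert space given by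
`x ∘ y = 2⟨J(x), a⟩a − J(x)` (with `a = (e₀ + y)/‖e₀ + y‖`, `J(v) = 2⟨v, e₀⟩e₀ − v`)
for `y ≠ -e₀`, and `x ∘ (-e₀) = -x`, right translation by any unit vector `y` is a
bijection of the sphere; consequently the sphere is a right quasigroup with identity `e₀`. -/
theorem sphere_op_right_quasigroup {E : Type*} [NormedAddCommGroup E]
    [InnerProductSpace ℝ E] [CompleteSpace E]
    (e₀ : E) (he₀ : ‖e₀‖ = 1) (op : E → E → E)
    (hop : ∀ x y : E, ‖x‖ = 1 → ‖y‖ = 1 → y ≠ -e₀ →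
      op x y = (2 * (inner ℝ ((2 * (inner ℝ x e₀ : ℝ)) • e₀ - x)
          (‖e₀ + y‖⁻¹ • (e₀ + y)) : ℝ)) • (‖e₀ + y‖⁻¹ • (e₀ + y)) -
        ((2 * (inner ℝ x e₀ : ℝ)) • e₀ - x))
    (hop' : ∀ x : E, ‖x‖ = 1 → op x (-e₀) = -x) :
    (∀ y : E, ‖y‖ = 1 →
      Set.BijOn (fun x => op x y) {v : E | ‖v‖ = 1} {v : E | ‖v‖ = 1}) ∧
    (∀ y : E, ‖y‖ = 1 → op e₀ y = y) ∧ (∀ x : E, ‖x‖ = 1 → op x e₀ = x) :=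
  sphere_op_right_quasigroup_general e₀ he₀ op hop hop'
end

section
/- Let S be a locally compact Hausdorff space carrying a right quasigroup structure ∘ with identity e such that ∘ : S × S → S and χ : S × S → S are continuous. Then the map Σ : S × C(S,S) → C(S,S), where C(S,S) carries the compact-open topology, defined by Σ(x,h)(y) = χ(h(x), h(y ∘ x)), is well-defined (each Σ(x,h) is a continuous self-map of S) and continuous. -/
/-!
`Σ` is the curried form of `((x, h), y) ↦ χ(h x, h (y ∘ x))`. That map is jointly continuous
because evaluation `C(S, T) × S → T` is continuous when `S` is locally compact, and currying
a continuous map always yields a continuous map into the compact-open topology.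
-/

section Sigma

variable {S T U : Type*} [TopologicalSpace S] [TopologicalSpace T] [TopologicalSpace U]
  [LocallyCompactSpace S]

def sigmaMap (op : S → S → S) (chi : T → T → U)
    (hopc : Continuous fun p : S × S => op p.1 p.2)
    (hchic : Continuous fun p : T × T => chi p.1 p.2) : C(S × C(S, T), C(S, U)) :=
  ContinuousMap.curry ⟨fun p => chi (p.1.2 p.1.1) (p.1.2 (op p.2 p.1.1)), by fun_prop⟩

@[simp]
theorem sigmaMap_apply (op : S → S → S) (chi : T → T → U)
    (hopc : Continuous fun p : S × S => op p.1 p.2)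
    (hchic : Continuous fun p : T × T => chi p.1 p.2) (x : S) (h : C(S, T)) (y : S) :
    sigmaMap op chi hopc hchic (x, h) y = chi (h x) (h (op y x)) :=
  rfl

end Sigma

theorem sigma_welldefined_continuous_general {S : Type*} [TopologicalSpace S]
    [LocallyCompactSpace S]
    (op : S → S → S)
    (chi : S → S → S)
    (hopc : Continuous fun p : S × S => op p.1 p.2)
    (hchic : Continuous fun p : S × S => chi p.1 p.2) :
    ∃ Sig : S × C(S, S) → C(S, S),
      (∀ (x : S) (h : C(S, S)) (y : S), Sig (x, h) y = chi (h x) (h (op y x))) ∧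
        Continuous Sig :=
  ⟨sigmaMap op chi hopc hchic, sigmaMap_apply op chi hopc hchic,
    (sigmaMap op chi hopc hchic).continuous⟩

/-- For a locally compact Hausdorff right quasigroup `(S, ∘)` with identity `e` and
continuous `∘` and `χ`, the map `Σ : S × C(S,S) → C(S,S)`,
`Σ(x,h)(y) = χ(h(x), h(y∘x))`, is well-defined and continuous, where `C(S,S)` carries
the compact-open topology. -/
theorem sigma_welldefined_continuous {S : Type*} [TopologicalSpace S]
    [LocallyCompactSpace S] [T2Space S]
    (op : S → S → S) (e : S)
    (he₁ : ∀ x, op e x = x) (he₂ : ∀ x, op x e = x)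
    (hbij : ∀ y, Function.Bijective fun x => op x y)
    (chi : S → S → S) (hchi : ∀ x y, op (chi x y) x = y)
    (hopc : Continuous fun p : S × S => op p.1 p.2)
    (hchic : Continuous fun p : S × S => chi p.1 p.2) :
    ∃ Sig : S × C(S, S) → C(S, S),
      (∀ (x : S) (h : C(S, S)) (y : S), Sig (x, h) y = chi (h x) (h (op y x))) ∧
        Continuous Sig :=
  sigma_welldefined_continuous_general op chi hopc hchic
end
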